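/- Let k ≥ 2, let a_1, a_2 ∈ ℂ^k be orthonormal vectors and let s = a_1 ⊗ a_2 + a_2 ⊗ a_1 ∈ ℂ^k ⊗ ℂ^k. Then for every real ε with 0 ≤ ε ≤ 1/2, the matrix B = P_sym^{k,2} − ε·s s^* has Schmidt number at most 2, i.e. B can be written as a finite sum Σ_j w_j w_j^* with each w_j ∈ ℂ^{k²} of Schmidt rank at most 2. -/

import Mathlib

open Matrix Finset

/-- The flip operator on ℂ^k ⊗ ℂ^k. -/
noncomputable def flipOp (k : ℕ) : Matrix (Fin k × Fin k) (Fin k × Fin k) ℂ :=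
  Matrix.of fun p q => if p.1 = q.2 ∧ p.2 = q.1 then 1 else 0

/-- Orthogonal projection onto the symmetric subspace of ℂ^k ⊗ ℂ^k. -/
noncomputable def psym (k : ℕ) : Matrix (Fin k × Fin k) (Fin k × Fin k) ℂ :=
  (1 / 2 : ℂ) • (1 + flipOp k)

/-- Schmidt rank of a vector in ℂ^k ⊗ ℂ^k: the rank of the associated k × k matrix. -/
noncomputable def schmidtRank {k : ℕ} (w : Fin k × Fin k → ℂ) : ℕ :=
  (Matrix.of fun i j => w (i, j) : Matrix (Fin k) (Fin k) ℂ).rank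

/-!
Extend `a₁, a₂` to an orthonormal basis `(bᵢ)` of `ℂ^k` and put `σᵢⱼ = bᵢ ⊗ bⱼ + bⱼ ⊗ bᵢ`.
Completeness of the basis gives `∑ᵢⱼ σᵢⱼ σᵢⱼ* = 2 (1 + F) = 4 P_sym`, and each `σᵢⱼ` has Schmidt
rank at most `2`. Since `σ₁₂ = σ₂₁ = s`, the term `s s*` occurs twice with weight `1/4`, so scaling
these two vectors by `√(1 - 2ε)` removes exactly `ε s s*`.
-/

def symTensor {n R : Type*} [Mul R] [Add R] (x y : n → R) : n × n → R :=
  fun p => x p.1 * y p.2 + y p.1 * x p.2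

theorem symTensor_comm {n R : Type*} [CommMagma R] [AddCommMagma R] (x y : n → R) :
    symTensor x y = symTensor y x := by
  ext p
  simp only [symTensor, add_comm, mul_comm]

theorem smul_symTensor {n R : Type*} [CommSemiring R] (c : R) (x y : n → R) :
    c • symTensor x y = symTensor (c • x) y := by
  ext p
  simp only [symTensor, Pi.smul_apply, smul_eq_mul]
  ring

theorem schmidtRank_symTensor_le_two {k : ℕ} (x y : Fin k → ℂ) :
    schmidtRank (symTensor x y) ≤ 2 := by
  have hfactor : (Matrix.of fun i j => symTensor x y (i, j) : Matrix (Fin k) (Fin k) ℂ) =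
      Matrix.of (fun i t => ![x i, y i] t) * Matrix.of ![y, x] := by
    ext i j
    simp [symTensor, Matrix.mul_apply, Fin.sum_univ_two]
  calc schmidtRank (symTensor x y)
      ≤ (Matrix.of fun i (t : Fin 2) => ![x i, y i] t).rank := by
        rw [schmidtRank, hfactor]; exact rank_mul_le_left _ _
    _ ≤ 2 := (rank_le_card_width _).trans_eq (Fintype.card_fin 2)

theorem OrthonormalBasis.sum_vecMulVec_star_eq_one {ι n 𝕜 : Type*} [Fintype ι] [Fintype n]
    [DecidableEq n] [RCLike 𝕜] (b : OrthonormalBasis ι 𝕜 (EuclideanSpace 𝕜 n)) :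
    ∑ i, vecMulVec ⇑(b i) (star ⇑(b i)) = 1 := by
  ext x y
  have h := b.sum_inner_mul_inner (EuclideanSpace.single x 1) (EuclideanSpace.single y 1)
  simp only [EuclideanSpace.inner_single_left, EuclideanSpace.inner_single_right, map_one,
    one_mul] at h
  simpa [Matrix.sum_apply, vecMulVec_apply, Matrix.one_apply, mul_comm, eq_comm] using h

theorem sum_vecMulVec_symTensor_eq_four_smul_psym {ι : Type*} [Fintype ι] {k : ℕ}
    (e : ι → Fin k → ℂ) (he : ∑ i, vecMulVec (e i) (star (e i)) = 1) :
    ∑ ij : ι × ι, vecMulVec (symTensor (e ij.1) (e ij.2)) (star (symTensor (e ij.1) (e ij.2)))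
      = (4 : ℂ) • psym k := by
  ext p q
  set E : Fin k → Fin k → ι → ℂ := fun x y i => e i x * star (e i y)
  have hE : ∀ x y, ∑ i, E x y i = if x = y then 1 else 0 := fun x y => by
    simpa [E, Matrix.sum_apply, vecMulVec_apply, Matrix.one_apply] using congrFun (congrFun he x) y
  calc _ = ∑ ij : ι × ι, (E p.1 q.1 ij.1 * E p.2 q.2 ij.2 + E p.1 q.2 ij.1 * E p.2 q.1 ij.2 +
        E p.2 q.1 ij.1 * E p.1 q.2 ij.2 + E p.2 q.2 ij.1 * E p.1 q.1 ij.2) := by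
        simp only [Matrix.sum_apply, vecMulVec_apply, symTensor, Pi.star_apply, star_add,
          star_mul', E]
        congr! 1
        ring
    _ = _ := by
      simp only [Finset.sum_add_distrib, Fintype.sum_prod_type, ← Finset.sum_mul_sum, hE]
      simp only [psym, flipOp, Matrix.smul_apply, Matrix.add_apply, Matrix.one_apply,
        Matrix.of_apply, smul_eq_mul, Prod.ext_iff]
      split_ifs <;> first | tauto | norm_num

theorem vecMulVec_ofReal_smul_star {n : Type*} (r : ℝ) (u : n → ℂ) :
    vecMulVec ((r : ℂ) • u) (star ((r : ℂ) • u)) =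
      ((r ^ 2 : ℝ) : ℂ) • vecMulVec u (star u) := by
  rw [star_smul, Complex.star_def, Complex.conj_ofReal, smul_vecMulVec, vecMulVec_smul, smul_smul]
  push_cast
  ring_nf

theorem sum_vecMulVec_ite_sqrt_smul {ι n : Type*} [Fintype ι] [DecidableEq ι] (u : ι → n → ℂ)
    (S : Finset ι) {t : ℝ} (ht : t ≤ 1) :
    ∑ i, vecMulVec (((if i ∈ S then √(1 - t) else 1 : ℝ) : ℂ) • u i)
        (star (((if i ∈ S then √(1 - t) else 1 : ℝ) : ℂ) • u i))
      = ∑ i, vecMulVec (u i) (star (u i)) -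
          (t : ℂ) • ∑ i ∈ S, vecMulVec (u i) (star (u i)) := by
  have hsq : ∀ i,
      (if i ∈ S then √(1 - t) else 1 : ℝ) ^ 2 = 1 - if i ∈ S then t else 0 := by
    intro i
    split_ifs
    · exact Real.sq_sqrt (by linarith)
    · simp
  simp_rw [vecMulVec_ofReal_smul_star, hsq, Complex.ofReal_sub, Complex.ofReal_one, sub_smul,
    one_smul, apply_ite Complex.ofReal, Complex.ofReal_zero, ite_smul, zero_smul]
  rw [Finset.sum_sub_distrib, Fintype.sum_ite_mem, Finset.smul_sum]

theorem sum_vecMulVec_half_symTensor_eq_psym {ι : Type*} [Fintype ι] {k : ℕ}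
    (e : ι → Fin k → ℂ) (he : ∑ i, vecMulVec (e i) (star (e i)) = 1) :
    ∑ ij : ι × ι, vecMulVec (((1 / 2 : ℝ) : ℂ) • symTensor (e ij.1) (e ij.2))
        (star (((1 / 2 : ℝ) : ℂ) • symTensor (e ij.1) (e ij.2))) = psym k := by
  simp only [vecMulVec_ofReal_smul_star, ← Finset.smul_sum,
    sum_vecMulVec_symTensor_eq_four_smul_psym e he, smul_smul]
  norm_num

theorem Orthonormal.exists_orthonormalBasis_extension_of_embedding {𝕜 E ι κ : Type*}
    [RCLike 𝕜] [NormedAddCommGroup E] [InnerProductSpace 𝕜 E] [FiniteDimensional 𝕜 E] [Fintype κ]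
    (card_κ : Module.finrank 𝕜 E = Fintype.card κ)
    {v : ι → E} (hv : Orthonormal 𝕜 v) (f : ι ↪ κ) :
    ∃ b : OrthonormalBasis κ 𝕜 E, ∀ i, b (f i) = v i := by
  set v' := Function.extend f v 0
  have hv' : ∀ i, v' (f i) = v i := f.injective.extend_apply v 0
  have hrestrict : (Set.range f).domRestrict v' = v ∘ (Equiv.ofInjective f f.injective).symm := by
    ext1 x
    rw [Set.domRestrict_apply, Function.comp_apply, ← hv',
      Equiv.apply_ofInjective_symm f.injective]
  obtain ⟨b, hb⟩ := (hrestrict ▸ hv.comp _ (Equiv.injective _))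
    |>.exists_orthonormalBasis_extension_of_card_eq card_κ
  exact ⟨b, fun i => (hb (f i) (Set.mem_range_self i)).trans (hv' i)⟩

theorem orthonormal_toLp_pair {k : ℕ} {a₁ a₂ : Fin k → ℂ}
    (ha₁ : ∑ i, Complex.normSq (a₁ i) = 1) (ha₂ : ∑ i, Complex.normSq (a₂ i) = 1)
    (horth : ∑ i, star (a₁ i) * a₂ i = 0) :
    Orthonormal ℂ ![WithLp.toLp 2 a₁, WithLp.toLp 2 a₂] := by
  have hinner : ∀ x y : Fin k → ℂ,
      inner ℂ (WithLp.toLp 2 x) (WithLp.toLp 2 y) = ∑ i, star (x i) * y i := by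
    intro x y
    simp [EuclideanSpace.inner_eq_star_dotProduct, dotProduct, mul_comm]
  have hnorm : ∀ x : Fin k → ℂ, ∑ i, Complex.normSq (x i) = 1 →
      inner ℂ (WithLp.toLp 2 x) (WithLp.toLp 2 x) = (1 : ℂ) := by
    intro x hx
    rw [hinner]
    simp only [Complex.star_def, ← Complex.normSq_eq_conj_mul_self]
    exact_mod_cast hx
  rw [orthonormal_iff_ite]
  intro i j
  fin_cases i <;> fin_cases j
  · simpa using hnorm a₁ ha₁
  · simpa [hinner] using horth
  · simpa [hinner, ← star_sum, mul_comm] using congrArg star horth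
  · simpa using hnorm a₂ ha₂

theorem psym_minus_sym_pair_schmidt_number_le_two_general (k : ℕ) (hk : 2 ≤ k)
    (a₁ a₂ : Fin k → ℂ)
    (ha₁ : ∑ i, Complex.normSq (a₁ i) = 1) (ha₂ : ∑ i, Complex.normSq (a₂ i) = 1)
    (horth : ∑ i, star (a₁ i) * a₂ i = 0)
    (s : Fin k × Fin k → ℂ) (hs : ∀ p, s p = a₁ p.1 * a₂ p.2 + a₂ p.1 * a₁ p.2)
    (ε : ℝ) (hε : ε ≤ 1 / 2) :
    ∃ (N : ℕ) (w : Fin N → Fin k × Fin k → ℂ),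
      psym k - (ε : ℂ) • Matrix.vecMulVec s (star s)
          = ∑ j, Matrix.vecMulVec (w j) (star (w j)) ∧
      ∀ j, schmidtRank (w j) ≤ 2 := by
  obtain ⟨b, hb⟩ := (orthonormal_toLp_pair ha₁ ha₂ horth)
    |>.exists_orthonormalBasis_extension_of_embedding (by simp) (Fin.castLEEmb hk)
  set i₁ := Fin.castLEEmb hk 0
  set i₂ := Fin.castLEEmb hk 1
  have hb₁ : ⇑(b i₁) = a₁ := congrArg WithLp.ofLp (hb 0)
  have hb₂ : ⇑(b i₂) = a₂ := congrArg WithLp.ofLp (hb 1)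
  have hne : (i₁, i₂) ≠ (i₂, i₁) := by simp [i₁, i₂, Fin.ext_iff]
  have hpsym := sum_vecMulVec_half_symTensor_eq_psym _ b.sum_vecMulVec_star_eq_one
  set u : Fin k × Fin k → Fin k × Fin k → ℂ :=
    fun ij => ((1 / 2 : ℝ) : ℂ) • symTensor (b ij.1) (b ij.2)
  have hs : s = symTensor a₁ a₂ := funext hs
  have hu₁₂ : u (i₁, i₂) = ((1 / 2 : ℝ) : ℂ) • s := by simp [u, hb₁, hb₂, hs]
  have hu₂₁ : u (i₂, i₁) = ((1 / 2 : ℝ) : ℂ) • s := by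
    simp [u, hb₁, hb₂, hs, symTensor_comm a₂]
  set w : Fin k × Fin k → Fin k × Fin k → ℂ := fun ij =>
    ((if ij ∈ ({(i₁, i₂), (i₂, i₁)} : Finset _) then √(1 - 2 * ε) else 1 : ℝ) : ℂ) • u ij
  refine ⟨_, w ∘ (Fintype.equivFin _).symm, ?_, fun j => ?_⟩
  · rw [Function.comp_def,
      Equiv.sum_comp (Fintype.equivFin _).symm (fun ij => vecMulVec (w ij) (star (w ij))),
      sum_vecMulVec_ite_sqrt_smul u _ (by linarith), hpsym, Finset.sum_pair hne, hu₁₂, hu₂₁,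
      vecMulVec_ofReal_smul_star]
    push_cast
    congr 1
    module
  · simp only [Function.comp_apply, w, u, smul_smul, smul_symTensor]
    exact schmidtRank_symTensor_le_two _ _

theorem psym_minus_sym_pair_schmidt_number_le_two (k : ℕ) (hk : 2 ≤ k)
    (a₁ a₂ : Fin k → ℂ)
    (ha₁ : ∑ i, Complex.normSq (a₁ i) = 1) (ha₂ : ∑ i, Complex.normSq (a₂ i) = 1)
    (horth : ∑ i, star (a₁ i) * a₂ i = 0)
    (s : Fin k × Fin k → ℂ) (hs : ∀ p, s p = a₁ p.1 * a₂ p.2 + a₂ p.1 * a₁ p.2)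
    (ε : ℝ) (hε0 : 0 ≤ ε) (hε : ε ≤ 1 / 2) :
    ∃ (N : ℕ) (w : Fin N → Fin k × Fin k → ℂ),
      psym k - (ε : ℂ) • Matrix.vecMulVec s (star s)
          = ∑ j, Matrix.vecMulVec (w j) (star (w j)) ∧
      ∀ j, schmidtRank (w j) ≤ 2 :=
  psym_minus_sym_pair_schmidt_number_le_two_general k hk a₁ a₂ ha₁ ha₂ horth s hs ε hε
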